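/- arXiv:1204.6013 — 2 statements merged into one kernel-verified Lean document; each statement's English description precedes it below -/
import Mathlib

section
/- Let 𝒜 : [0,∞) → [0,∞) be continuous, and Y(t;s,R) denote the solution of Y' = C(Y⁴+Y), Y(s) = R, with maximal existence time s + T_max(R,C). Suppose: (a) 𝒜(t) ≤ Y(t;s,R) on the existence interval whenever 𝒜(s) ≤ R; and (b) for every t ≥ 0 there exists t_* ∈ [t + (1/2)t₀, t + (3/4)t₀] with 𝒜(t_*) ≤ R, where t₀ = (3/4)T_max(R,C). Then 𝒜(t) ≤ K for all t ≥ 0, where K = sup_{[0,t₀]} Y(·;0,R). -/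
open Set

/-- Iteration/extension argument: if `𝒜` is dominated by the translated solutions
`Y(·; s, R)` of the comparison ODE (which are uniformly bounded by `K` on intervals
of length `t₀`), and in every window `[t + t₀/2, t + 3t₀/4]` there is a time where
`𝒜 ≤ R`, then `𝒜 ≤ K` globally. -/
theorem stmt_7 (A : ℝ → ℝ) (Y : ℝ → ℝ → ℝ) (R K t₀ : ℝ)
    (hR : 0 < R) (ht₀ : 0 < t₀)
    (hAcont : Continuous A) (hApos : ∀ t ≥ (0:ℝ), 0 ≤ A t)
    -- `K` bounds the comparison solutions on their guaranteed existence intervals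
    (hK : ∀ s ≥ (0:ℝ), ∀ t ∈ Icc s (s + t₀), Y s t ≤ K)
    -- (a) ODE comparison: if `𝒜(s) ≤ R` then `𝒜 ≤ Y(·; s, R)` on `[s, s + t₀]`
    (hcomp : ∀ s ≥ (0:ℝ), A s ≤ R → ∀ t ∈ Icc s (s + t₀), A t ≤ Y s t)
    (hA0 : A 0 ≤ R)
    -- (b) good times: in every window `[t + t₀/2, t + 3t₀/4]` one has `𝒜 ≤ R`
    (hgood : ∀ t ≥ (0:ℝ), ∃ ts ∈ Icc (t + t₀ / 2) (t + 3 * t₀ / 4), A ts ≤ R) :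
    ∀ t ≥ (0:ℝ), A t ≤ K := by
  -- good points as a subtype
  have step : ∀ x : {x : ℝ // 0 ≤ x ∧ A x ≤ R},
      ∃ y : {x : ℝ // 0 ≤ x ∧ A x ≤ R},
        x.1 + t₀ / 2 ≤ y.1 ∧ y.1 ≤ x.1 + 3 * t₀ / 4 := by
    rintro ⟨x, hx, hAx⟩
    obtain ⟨y, hy, hAy⟩ := hgood x hx
    exact ⟨⟨y, by nlinarith [hy.1], hAy⟩, hy.1, hy.2⟩
  choose F hF1 hF2 using step
  set s : ℕ → {x : ℝ // 0 ≤ x ∧ A x ≤ R} :=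
    fun n => F^[n] ⟨0, le_refl 0, hA0⟩ with hs
  have hsucc : ∀ n, s (n + 1) = F (s n) := by
    intro n; simp [hs, Function.iterate_succ_apply']
  have h1 : ∀ n, (s n).1 + t₀ / 2 ≤ (s (n + 1)).1 := by
    intro n; rw [hsucc]; exact hF1 _
  have h2 : ∀ n, (s (n + 1)).1 ≤ (s n).1 + 3 * t₀ / 4 := by
    intro n; rw [hsucc]; exact hF2 _
  have hgrow : ∀ n : ℕ, (n : ℝ) * (t₀ / 2) ≤ (s n).1 := by
    intro n
    induction n with
    | zero => simp [hs]
    | succ n ih => push_cast; nlinarith [h1 n]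
  intro t ht
  -- find n with (s n).1 ≤ t < (s (n+1)).1
  obtain ⟨m, hm⟩ := Archimedean.arch t (by positivity : (0:ℝ) < t₀ / 2)
  have hmt : t < (s (m + 1)).1 := by
    have := hgrow (m + 1)
    have hm' : t ≤ (m : ℝ) * (t₀ / 2) := by
      simpa [nsmul_eq_mul] using hm
    push_cast at this
    nlinarith
  have hex : ∃ k, t < (s k).1 := ⟨m + 1, hmt⟩
  classical
  have hk0 : Nat.find hex ≠ 0 := by
    intro h
    have := Nat.find_spec hex
    rw [h] at this
    simp [hs] at this
    linarith
  obtain ⟨n, hn⟩ := Nat.exists_eq_succ_of_ne_zero hk0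
  have hlt : t < (s (n + 1)).1 := by
    have := Nat.find_spec hex; rwa [hn] at this
  have hle : (s n).1 ≤ t := by
    by_contra h
    exact Nat.find_min hex (by omega : n < Nat.find hex) (by push_neg at h; exact h)
  have hmem : t ∈ Icc (s n).1 ((s n).1 + t₀) := by
    constructor
    · exact hle
    · have := h2 n; nlinarith [hlt]
  calc A t ≤ Y (s n).1 t := hcomp (s n).1 (s n).2.1 (s n).2.2 t hmem
    _ ≤ K := hK (s n).1 (s n).2.1 t hmem
end

section
/- Let y, A : [0,∞) → [0,∞) be differentiable and suppose y'(t) + C₂ y(t) + C₃ A(t) ≤ h(t) and A'(t) ≤ C₄ A(t) for all t ≥ 0, where C₂, C₃, C₄ > 0 and h(t) ≤ C(1+t)^{−2ξ/(1−2ξ)} for some ξ ∈ (0,1/2). Then with η = C₃/(2C₄), the combination Z(t) = y(t) + η A(t) satisfies Z'(t) + C' Z(t) ≤ h(t) for some C' > 0, and consequently Z(t) ≤ C''(1+t)^{−2ξ/(1−2ξ)} for all t ≥ 0. -/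
open Set

lemma decay_aux (Z : ℝ → ℝ) (C' C α : ℝ) (hC' : 0 < C') (hC : 0 < C) (hα : 0 < α)
    (hZ : Differentiable ℝ Z)
    (hineq : ∀ t ≥ (0:ℝ), deriv Z t + C' * Z t ≤ C * (1 + t) ^ (-α)) :
    ∃ K > 0, ∀ t ≥ (0:ℝ), Z t ≤ K * (1 + t) ^ (-α) := by
  set T : ℝ := 2 * α / C' with hTdef
  have hT : 0 ≤ T := by positivity
  obtain ⟨t₀, ht₀, hmax⟩ := (isCompact_Icc (a := (0:ℝ)) (b := T)).exists_isMaxOn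
    (nonempty_Icc.mpr hT) hZ.continuous.continuousOn
  set B : ℝ := Z t₀ with hBdef
  set K : ℝ := max (2 * C / C') ((max B 0) * (1 + T) ^ α) with hKdef
  have hK0 : 0 < K := lt_max_of_lt_left (by positivity)
  refine ⟨K, hK0, ?_⟩
  -- basic facts
  have hpow_pos : ∀ s : ℝ, 0 ≤ s → (0:ℝ) < (1 + s) ^ (-α) := fun s hs =>
    Real.rpow_pos_of_pos (by linarith) _
  -- bound on [0, T]
  have hIcc : ∀ t ∈ Icc (0:ℝ) T, Z t ≤ K * (1 + t) ^ (-α) := by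
    intro t ht
    have h1 : Z t ≤ max B 0 := le_max_of_le_left (hmax ht)
    have h2 : (1 + T) ^ (-α) ≤ (1 + t) ^ (-α) :=
      Real.rpow_le_rpow_of_nonpos (by linarith [ht.1]) (by linarith [ht.2]) (by linarith)
    have h3 : (max B 0) * (1 + T) ^ α ≤ K := le_max_right _ _
    have h4 : (1 + T) ^ α * (1 + T) ^ (-α) = 1 := by
      rw [← Real.rpow_add (by linarith)]; simp
    calc Z t ≤ max B 0 := h1
      _ = (max B 0) * (1 + T) ^ α * (1 + T) ^ (-α) := by rw [mul_assoc, h4, mul_one]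
      _ ≤ K * (1 + T) ^ (-α) := by
          apply mul_le_mul_of_nonneg_right h3 (le_of_lt (Real.rpow_pos_of_pos (by linarith) _))
      _ ≤ K * (1 + t) ^ (-α) := mul_le_mul_of_nonneg_left h2 hK0.le
  intro t ht
  rcases le_or_gt t T with hcase | hcase
  · exact hIcc t ⟨ht, hcase⟩
  · -- t > T : comparison argument
    set W : ℝ → ℝ := fun s => K * (1 + s) ^ (-α) with hWdef
    set G : ℝ → ℝ := fun s => Real.exp (C' * s) * (Z s - W s) with hGdef
    have hWderiv : ∀ s : ℝ, 0 ≤ s →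
        HasDerivAt W (K * ((-α) * (1 + s) ^ (-α - 1))) s := by
      intro s hs
      have h1 : HasDerivAt (fun x : ℝ => 1 + x) 1 s := by
        simpa using (hasDerivAt_id s).const_add 1
      have h2 : HasDerivAt (fun x : ℝ => x ^ (-α)) ((-α) * (1 + s) ^ (-α - 1)) (1 + s) :=
        Real.hasDerivAt_rpow_const (Or.inl (by positivity))
      have h3 := (h2.comp s h1)
      have h4 : HasDerivAt (fun x : ℝ => K * (1 + x) ^ (-α)) (K * ((-α) * (1 + s) ^ (-α - 1) * 1)) s :=
        h3.const_mul K
      simpa using h4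
    have hGderiv : ∀ s : ℝ, 0 ≤ s →
        HasDerivAt G (Real.exp (C' * s) *
          ((deriv Z s + C' * Z s) - (K * ((-α) * (1 + s) ^ (-α - 1)) + C' * W s))) s := by
      intro s hs
      have he : HasDerivAt (fun x : ℝ => Real.exp (C' * x)) (C' * Real.exp (C' * s)) s := by
        have : HasDerivAt (fun x : ℝ => C' * x) C' s := by
          simpa using (hasDerivAt_id s).const_mul C'
        simpa [mul_comm] using this.exp
      have hd : HasDerivAt (fun x => Z x - W x) (deriv Z s - K * ((-α) * (1 + s) ^ (-α - 1))) s :=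
        (hZ s).hasDerivAt.sub (hWderiv s hs)
      have : HasDerivAt G _ s := he.fun_mul hd
      convert this using 1
      ring
    have hGanti : AntitoneOn G (Icc T t) := by
      apply antitoneOn_of_deriv_nonpos (convex_Icc T t)
      · apply ContinuousOn.mul (by fun_prop)
        apply ContinuousOn.sub hZ.continuous.continuousOn
        intro s hs
        exact ((hWderiv s (le_trans hT hs.1)).continuousAt).continuousWithinAt
      · intro s hs
        rw [interior_Icc] at hs
        exact ((hGderiv s (le_trans hT hs.1.le)).differentiableAt).differentiableWithinAt
      · intro s hs
        rw [interior_Icc] at hs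
        have hsT : T < s := hs.1
        have hs0 : (0:ℝ) ≤ s := le_trans hT hsT.le
        have h1s : (0:ℝ) < 1 + s := by linarith
        rw [(hGderiv s hs0).deriv]
        apply mul_nonpos_of_nonneg_of_nonpos (Real.exp_nonneg _)
        rw [sub_nonpos]
        calc deriv Z s + C' * Z s ≤ C * (1 + s) ^ (-α) := hineq s hs0
          _ ≤ K * ((-α) * (1 + s) ^ (-α - 1)) + C' * W s := by
              have hsplit : (1 + s) ^ (-α - 1) = (1 + s) ^ (-α) * (1 + s)⁻¹ := by
                rw [show -α - 1 = -α + (-1) by ring, Real.rpow_add h1s,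
                  Real.rpow_neg_one]
              rw [hsplit, hWdef]
              have hpos := hpow_pos s hs0
              have hfrac : α * (1 + s)⁻¹ ≤ C' / 2 := by
                rw [div_eq_mul_inv] at hTdef
                have h2a : 2 * α / C' < s := hsT
                rw [inv_eq_one_div, mul_div_assoc' α 1 (1+s), mul_one, div_le_div_iff₀ h1s (by norm_num)]
                have : 2 * α ≤ C' * s := by
                  rw [div_lt_iff₀ hC'] at h2a
                  linarith
                nlinarith
              have hKge : 2 * C / C' ≤ K := le_max_left _ _
              have hKC : C ≤ K * (C' / 2) := by
                rw [div_le_iff₀ hC'] at hKge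
                nlinarith
              have key : C ≤ K * (C' - α * (1 + s)⁻¹) := by
                have : K * (C' / 2) ≤ K * (C' - α * (1 + s)⁻¹) :=
                  mul_le_mul_of_nonneg_left (by linarith) hK0.le
                linarith
              calc C * (1 + s) ^ (-α) ≤ (K * (C' - α * (1 + s)⁻¹)) * (1 + s) ^ (-α) :=
                    mul_le_mul_of_nonneg_right key hpos.le
                _ = K * (-α * ((1 + s) ^ (-α) * (1 + s)⁻¹)) + C' * (K * (1 + s) ^ (-α)) := by
                    ring
    have hGT : G T ≤ 0 := by
      have := hIcc T ⟨hT, le_refl T⟩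
      have : Z T - W T ≤ 0 := by simp [hWdef]; linarith
      exact mul_nonpos_of_nonneg_of_nonpos (Real.exp_nonneg _) this
    have hGt : G t ≤ G T := hGanti ⟨le_refl T, hcase.le⟩ ⟨hcase.le, le_refl t⟩ hcase.le
    have : G t ≤ 0 := le_trans hGt hGT
    have hexp : 0 < Real.exp (C' * t) := Real.exp_pos _
    have : Z t - W t ≤ 0 := by
      by_contra hcon
      push_neg at hcon
      have : 0 < G t := mul_pos hexp hcon
      linarith
    simpa [hWdef] using this

/-- Differential-inequality bootstrap: combining `y' + C₂y + C₃A ≤ h` with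
`A' ≤ C₄A` and `h(t) ≤ C(1+t)^{−2ξ/(1−2ξ)}`, the combination
`Z = y + (C₃/(2C₄))A` satisfies `Z' + C'Z ≤ h` and decays polynomially. -/
theorem stmt_12 (y A h : ℝ → ℝ) (C₂ C₃ C₄ C ξ : ℝ)
    (hC₂ : 0 < C₂) (hC₃ : 0 < C₃) (hC₄ : 0 < C₄) (hC : 0 < C)
    (hξ : ξ ∈ Ioo (0:ℝ) (1/2))
    (hypos : ∀ t ≥ (0:ℝ), 0 ≤ y t) (hApos : ∀ t ≥ (0:ℝ), 0 ≤ A t)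
    (hydiff : Differentiable ℝ y) (hAdiff : Differentiable ℝ A)
    (hy : ∀ t ≥ (0:ℝ), deriv y t + C₂ * y t + C₃ * A t ≤ h t)
    (hA : ∀ t ≥ (0:ℝ), deriv A t ≤ C₄ * A t)
    (hh : ∀ t ≥ (0:ℝ), h t ≤ C * (1 + t) ^ (-(2 * ξ / (1 - 2 * ξ)))) :
    (∃ C' > 0, ∀ t ≥ (0:ℝ),
        deriv (fun s => y s + C₃ / (2 * C₄) * A s) t
          + C' * (y t + C₃ / (2 * C₄) * A t) ≤ h t) ∧
      ∃ C'' > 0, ∀ t ≥ (0:ℝ),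
        y t + C₃ / (2 * C₄) * A t ≤ C'' * (1 + t) ^ (-(2 * ξ / (1 - 2 * ξ))) := by
  set η : ℝ := C₃ / (2 * C₄) with hηdef
  have hη : 0 < η := by positivity
  set C' : ℝ := min C₂ C₄ with hC'def
  have hC'pos : 0 < C' := lt_min hC₂ hC₄
  have hderiv : ∀ t : ℝ, deriv (fun s => y s + η * A s) t = deriv y t + η * deriv A t := by
    intro t
    rw [deriv_fun_add (hydiff t) ((hAdiff t).const_mul η), deriv_const_mul η (hAdiff t)]
  have hmain : ∀ t ≥ (0:ℝ),
      deriv (fun s => y s + η * A s) t + C' * (y t + η * A t) ≤ h t := by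
    intro t ht
    rw [hderiv t]
    have h1 := hy t ht
    have h2 := hA t ht
    have h3 := hypos t ht
    have h4 := hApos t ht
    have h5 : C' ≤ C₂ := min_le_left _ _
    have h6 : C' ≤ C₄ := min_le_right _ _
    have h7 : η * deriv A t ≤ η * (C₄ * A t) := mul_le_mul_of_nonneg_left h2 hη.le
    have h8 : η * (C₄ * A t) = C₃ / 2 * A t := by
      rw [hηdef]; field_simp
    have h9 : C' * (y t + η * A t) ≤ C₂ * y t + C₃ / 2 * A t := by
      have ha : C' * y t ≤ C₂ * y t := mul_le_mul_of_nonneg_right h5 h3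
      have hb : C' * (η * A t) ≤ C₄ * (η * A t) :=
        mul_le_mul_of_nonneg_right h6 (by positivity)
      have hc : C₄ * (η * A t) = C₃ / 2 * A t := by rw [hηdef]; field_simp
      nlinarith
    nlinarith
  refine ⟨⟨C', hC'pos, hmain⟩, ?_⟩
  set α : ℝ := 2 * ξ / (1 - 2 * ξ) with hαdef
  have hα : 0 < α := by
    obtain ⟨h1, h2⟩ := hξ
    have : 0 < 1 - 2 * ξ := by linarith
    positivity
  obtain ⟨K, hK, hKle⟩ := decay_aux (fun t => y t + η * A t) C' C α hC'pos hC hα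
    (hydiff.add (hAdiff.const_mul η))
    (fun t ht => le_trans (hmain t ht) (hh t ht))
  exact ⟨K, hK, hKle⟩
end
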